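/- Let ε > 0, let τ_1, …, τ_N be positive time steps with ratios r_1 := 0, r_k := τ_k/τ_{k−1} for 2 ≤ k ≤ N, and let r_{N+1} ≥ 0 be given; assume 0 < r_k < (3+√17)/2 for 2 ≤ k ≤ N, r_{N+1} < (3+√17)/2, and the time-step restriction τ_n ≤ 4ε · min{ 1, (2+4r_n−r_n²)/(1+r_n) − r_{n+1}/(1+r_{n+1}) } for 1 ≤ n ≤ N. Let periodic grid functions φ^0, φ^1, …, φ^N satisfy the variable-step BDF2 scheme D_2 φ^n + ε Δ_h² φ^n + ∇_h · f(∇_h φ^n) = 0 at every grid point for 1 ≤ n ≤ N, where D_2 φ^n := Σ_{k=1}^{n} b_{n−k}^{(n)} (φ^k − φ^{k−1}). Define the discrete energy E[φ] := (ε/2)‖Δ_h φ‖² − (h²/2) Σ_{i,j} ln(1 + |∇_h φ_{ij}|²) and the modified energy ℰ[φ^n] := E[φ^n] + r_{n+1}/(2(1+r_{n+1})τ_n) ‖φ^n − φ^{n−1}‖² for 1 ≤ n ≤ N, with ℰ[φ^0] := E[φ^0]. Then ℰ[φ^n] ≤ ℰ[φ^{n−1}] for all 1 ≤ n ≤ N;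 in particular ℰ[φ^n] ≤ E[φ^0]. -/

import Mathlib

open Finset

/-- Central difference in the first index: `Δ_x v_{ij} = (v_{i+1,j} − v_{i−1,j})/(2h)`. -/
noncomputable def Dx (M : ℕ) (h : ℝ) (v : ZMod M → ZMod M → ℝ) :
    ZMod M → ZMod M → ℝ :=
  fun i j => (v (i + 1) j - v (i - 1) j) / (2 * h)

/-- Central difference in the second index. -/
noncomputable def Dy (M : ℕ) (h : ℝ) (v : ZMod M → ZMod M → ℝ) :
    ZMod M → ZMod M → ℝ :=
  fun i j => (v i (j + 1) - v i (j - 1)) / (2 * h)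

/-- Second difference in the first index: `δ_x² v_{ij}`. -/
noncomputable def Dxx (M : ℕ) (h : ℝ) (v : ZMod M → ZMod M → ℝ) :
    ZMod M → ZMod M → ℝ :=
  fun i j => (v (i + 1) j - 2 * v i j + v (i - 1) j) / h ^ 2

/-- Second difference in the second index: `δ_y² v_{ij}`. -/
noncomputable def Dyy (M : ℕ) (h : ℝ) (v : ZMod M → ZMod M → ℝ) :
    ZMod M → ZMod M → ℝ :=
  fun i j => (v i (j + 1) - 2 * v i j + v i (j - 1)) / h ^ 2

/-- Discrete Laplacian `Δ_h v := δ_x² v + δ_y² v`. -/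
noncomputable def lap (M : ℕ) (h : ℝ) (v : ZMod M → ZMod M → ℝ) :
    ZMod M → ZMod M → ℝ :=
  fun i j => Dxx M h v i j + Dyy M h v i j

/-- Discrete `L²` inner product `⟨v, w⟩ := h² Σ_{i,j} v_{ij} w_{ij}`. -/
noncomputable def gip (M : ℕ) [NeZero M] (h : ℝ) (v w : ZMod M → ZMod M → ℝ) : ℝ :=
  h ^ 2 * ∑ i : ZMod M, ∑ j : ZMod M, v i j * w i j

/-- Discrete `L²` norm. -/
noncomputable def gnorm (M : ℕ) [NeZero M] (h : ℝ) (v : ZMod M → ZMod M → ℝ) : ℝ :=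
  Real.sqrt (gip M h v v)

/-- Discrete divergence of the nonlinear force applied to the discrete gradient:
`∇_h · f(∇_h v)` where `f(u) = u/(1+|u|²)`. -/
noncomputable def divf (M : ℕ) (h : ℝ) (v : ZMod M → ZMod M → ℝ) :
    ZMod M → ZMod M → ℝ :=
  fun i j =>
    Dx M h (fun a b => Dx M h v a b / (1 + (Dx M h v a b) ^ 2 + (Dy M h v a b) ^ 2)) i j
      + Dy M h (fun a b => Dy M h v a b / (1 + (Dx M h v a b) ^ 2 + (Dy M h v a b) ^ 2)) i j

/-- BDF2 kernels `b_j^{(n)}` (assuming `r 1 = 0`, so the `n = 1` case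
`b_0^{(1)} = 1/τ_1` is subsumed by the general formula). -/
noncomputable def bk (τ r : ℕ → ℝ) (n j : ℕ) : ℝ :=
  if j = 0 then (1 + 2 * r n) / (τ n * (1 + r n))
  else if j = 1 then -(r n) ^ 2 / (τ n * (1 + r n))
  else 0

/-- The variable-step BDF2 formula applied to a sequence of grid functions. -/
noncomputable def D2g (M : ℕ) (τ r : ℕ → ℝ) (φ : ℕ → ZMod M → ZMod M → ℝ)
    (n : ℕ) : ZMod M → ZMod M → ℝ :=
  fun i j => ∑ k ∈ Finset.Icc 1 n, bk τ r n (n - k) * (φ k i j - φ (k - 1) i j)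

/-- Discrete energy `E[φ] := (ε/2)‖Δ_h φ‖² − (h²/2) Σ_{i,j} ln(1+|∇_h φ_{ij}|²)`. -/
noncomputable def En (M : ℕ) [NeZero M] (h ε : ℝ) (v : ZMod M → ZMod M → ℝ) : ℝ :=
  (ε / 2) * gip M h (lap M h v) (lap M h v)
    - (h ^ 2 / 2) * ∑ i : ZMod M, ∑ j : ZMod M,
        Real.log (1 + (Dx M h v i j) ^ 2 + (Dy M h v i j) ^ 2)

/-- Modified discrete energy `ℰ[φ^n]`, with `ℰ[φ^0] := E[φ^0]`. -/
noncomputable def calE (M : ℕ) [NeZero M] (h ε : ℝ) (τ r : ℕ → ℝ)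
    (φ : ℕ → ZMod M → ZMod M → ℝ) (n : ℕ) : ℝ :=
  if n = 0 then En M h ε (φ 0)
  else En M h ε (φ n)
    + r (n + 1) / (2 * (1 + r (n + 1)) * τ n)
        * gip M h (fun i j => φ n i j - φ (n - 1) i j)
            (fun i j => φ n i j - φ (n - 1) i j)

/-! Test the scheme with `δ = φⁿ - φⁿ⁻¹`. Periodic summation by parts turns the biharmonic term
into `(ε/2)(‖Δ_h φⁿ‖² - ‖Δ_h φⁿ⁻¹‖² + ‖Δ_h δ‖²)` and the force term into the linearisation of the
logarithmic energy at `φⁿ`; the linearisation error is at most `½‖∇_h δ‖²`, and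
`‖∇_h δ‖² ≤ -⟨Δ_h δ, δ⟩ ≤ ε‖Δ_h δ‖² + ‖δ‖²/(4ε)` absorbs it. The BDF2 cross term
`b₁⟨φⁿ⁻¹ - φⁿ⁻², δ⟩` is split by Cauchy–Schwarz into the stabilising terms of the modified
energies at `n` and `n - 1`, and the time-step restriction is exactly what makes the remaining
coefficient of `‖δ‖²` nonpositive. -/

section InnerProduct

variable {M : ℕ} [NeZero M] (h : ℝ) (u v w : ZMod M → ZMod M → ℝ)

lemma gip_comm : gip M h u v = gip M h v u := by
  simp only [gip, mul_comm (u _ _)]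

lemma gip_add_left : gip M h (u + v) w = gip M h u w + gip M h v w := by
  simp only [gip, Pi.add_apply, add_mul, sum_add_distrib, mul_add]

lemma gip_sub_left : gip M h (u - v) w = gip M h u w - gip M h v w := by
  simp only [gip, Pi.sub_apply, sub_mul, sum_sub_distrib, mul_sub]

lemma gip_smul_left (c : ℝ) : gip M h (c • u) w = c * gip M h u w := by
  simp only [gip, Pi.smul_apply, smul_eq_mul, mul_assoc, ← mul_sum]
  ring

lemma gip_add_right : gip M h u (v + w) = gip M h u v + gip M h u w := by
  rw [gip_comm, gip_add_left, gip_comm, gip_comm h w]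

lemma gip_sub_right : gip M h u (v - w) = gip M h u v - gip M h u w := by
  rw [gip_comm, gip_sub_left, gip_comm, gip_comm h w]

lemma gip_smul_right (c : ℝ) : gip M h u (c • v) = c * gip M h u v := by
  rw [gip_comm, gip_smul_left, gip_comm]

lemma gip_self_nonneg : 0 ≤ gip M h u u :=
  mul_nonneg (sq_nonneg h) (sum_nonneg fun _ _ => sum_nonneg fun _ _ => mul_self_nonneg _)

lemma two_mul_gip_le : 2 * gip M h u v ≤ gip M h u u + gip M h v v := by
  have := gip_self_nonneg h (u - v)
  rw [gip_sub_left, gip_sub_right, gip_sub_right, gip_comm h v u] at this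
  linarith

lemma gip_add_self_le : gip M h (u + v) (u + v) ≤ 2 * (gip M h u u + gip M h v v) := by
  have := two_mul_gip_le h u v
  rw [gip_add_left, gip_add_right, gip_add_right, gip_comm h v u]
  linarith

lemma gip_flip : gip M h (flip u) (flip v) = gip M h u v := by
  simp only [gip, flip]
  rw [sum_comm]

lemma gip_eq_zero_of_forall_eq_zero (hu : ∀ i j, u i j = 0) : gip M h u v = 0 := by
  simp [gip, hu]

end InnerProduct

def shiftX {M : ℕ} (c : ZMod M) (v : ZMod M → ZMod M → ℝ) : ZMod M → ZMod M → ℝ :=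
  fun i j => v (i + c) j

section DifferenceOperators

variable {M : ℕ} (h : ℝ) (u v : ZMod M → ZMod M → ℝ)

lemma shiftX_zero : shiftX 0 u = u := by
  ext i j
  simp only [shiftX, add_zero]

lemma shiftX_shiftX (c d : ZMod M) : shiftX c (shiftX d u) = shiftX (c + d) u := by
  ext i j
  simp only [shiftX, add_assoc]

lemma Dx_eq_shiftX : Dx M h u = (2 * h)⁻¹ • (shiftX 1 u - shiftX (-1) u) := by
  ext i j
  simp only [Dx, shiftX, Pi.smul_apply, Pi.sub_apply, smul_eq_mul, ← sub_eq_add_neg]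
  ring

lemma Dxx_eq_shiftX :
    Dxx M h u = (h ^ 2)⁻¹ • (shiftX 1 u - (2 : ℝ) • u + shiftX (-1) u) := by
  ext i j
  simp only [Dxx, shiftX, Pi.smul_apply, Pi.sub_apply, Pi.add_apply, smul_eq_mul,
    ← sub_eq_add_neg]
  ring

lemma Dx_sub : Dx M h (u - v) = Dx M h u - Dx M h v := by
  ext i j
  simp only [Dx, Pi.sub_apply]
  ring

lemma Dy_sub : Dy M h (u - v) = Dy M h u - Dy M h v := by
  ext i j
  simp only [Dy, Pi.sub_apply]
  ring

lemma lap_sub : lap M h (u - v) = lap M h u - lap M h v := by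
  ext i j
  simp only [lap, Dxx, Dyy, Pi.sub_apply]
  ring

end DifferenceOperators

section SummationByParts

variable {M : ℕ} [NeZero M] (h : ℝ) (u v : ZMod M → ZMod M → ℝ)

lemma gip_shiftX_left (c : ZMod M) :
    gip M h (shiftX c u) v = gip M h u (shiftX (-c) v) := by
  simp only [gip, shiftX]
  congr 1
  exact Fintype.sum_equiv (Equiv.addRight c) _ _ fun i => by simp

lemma gip_shiftX_shiftX (c : ZMod M) :
    gip M h (shiftX c u) (shiftX c v) = gip M h u v := by
  rw [gip_shiftX_left, shiftX_shiftX, neg_add_cancel, shiftX_zero]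

lemma gip_Dx_left : gip M h (Dx M h u) v = -gip M h u (Dx M h v) := by
  rw [Dx_eq_shiftX, Dx_eq_shiftX, gip_smul_left, gip_smul_right, gip_sub_left, gip_sub_right,
    gip_shiftX_left, gip_shiftX_left, neg_neg]
  ring

-- `Dy M h u` is definitionally `flip (Dx M h (flip u))`, and likewise for `Dyy`.
lemma gip_Dy_left : gip M h (Dy M h u) v = -gip M h u (Dy M h v) := by
  have := gip_Dx_left h (flip u) (flip v)
  rwa [← gip_flip h (Dx M h (flip u)), ← gip_flip h (flip u)] at this

lemma gip_Dxx_left : gip M h (Dxx M h u) v = gip M h u (Dxx M h v) := by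
  rw [Dxx_eq_shiftX, Dxx_eq_shiftX, gip_smul_left, gip_smul_right, gip_add_left, gip_sub_left,
    gip_add_right, gip_sub_right, gip_smul_left, gip_smul_right, gip_shiftX_left,
    gip_shiftX_left, neg_neg]
  ring

lemma gip_Dyy_left : gip M h (Dyy M h u) v = gip M h u (Dyy M h v) := by
  have := gip_Dxx_left h (flip u) (flip v)
  rwa [← gip_flip h (Dxx M h (flip u)), ← gip_flip h (flip u)] at this

lemma gip_lap_left : gip M h (lap M h u) v = gip M h u (lap M h v) := by
  have hsplit : ∀ w, lap M h w = Dxx M h w + Dyy M h w := fun _ => rfl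
  rw [hsplit, hsplit, gip_add_left, gip_add_right, gip_Dxx_left, gip_Dyy_left]

end SummationByParts

section GradientBound

variable {M : ℕ} [NeZero M] (h : ℝ) (u v : ZMod M → ZMod M → ℝ)

lemma gip_Dx_self_le : gip M h (Dx M h u) (Dx M h u) ≤ -gip M h (Dxx M h u) u := by
  obtain ⟨b, hb⟩ : ∃ b, b = u - shiftX (-1) u := ⟨_, rfl⟩
  have hfwd : shiftX 1 b = shiftX 1 u - u := by
    rw [hb, show shiftX 1 (u - shiftX (-1) u) = shiftX 1 u - shiftX 1 (shiftX (-1) u) from rfl,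
      shiftX_shiftX, add_neg_cancel, shiftX_zero]
  have hDx : Dx M h u = (2 * h)⁻¹ • (shiftX 1 b + b) := by
    rw [Dx_eq_shiftX, hfwd, hb]
    abel_nf
  have hDxx : Dxx M h u = (h ^ 2)⁻¹ • (shiftX 1 b - b) := by
    rw [Dxx_eq_shiftX, hfwd, hb]
    module
  calc gip M h (Dx M h u) (Dx M h u)
      = ((2 * h)⁻¹) ^ 2 * gip M h (shiftX 1 b + b) (shiftX 1 b + b) := by
        rw [hDx, gip_smul_left, gip_smul_right]
        ring
    _ ≤ ((2 * h)⁻¹) ^ 2 * (2 * (gip M h (shiftX 1 b) (shiftX 1 b) + gip M h b b)) :=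
        mul_le_mul_of_nonneg_left (gip_add_self_le h _ _) (sq_nonneg _)
    _ = (h ^ 2)⁻¹ * (gip M h b u - gip M h b (shiftX (-1) u)) := by
        rw [gip_shiftX_shiftX, ← gip_sub_right, ← hb]
        ring
    _ = -gip M h (Dxx M h u) u := by
        rw [hDxx, gip_smul_left, gip_sub_left, gip_shiftX_left]
        ring

lemma gip_grad_self_le :
    gip M h (Dx M h u) (Dx M h u) + gip M h (Dy M h u) (Dy M h u) ≤ -gip M h (lap M h u) u := by
  have hy : gip M h (Dy M h u) (Dy M h u) ≤ -gip M h (Dyy M h u) u := by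
    have := gip_Dx_self_le h (flip u)
    rwa [← gip_flip h (Dx M h (flip u)), ← gip_flip h (Dxx M h (flip u))] at this
  have hlap : lap M h u = Dxx M h u + Dyy M h u := rfl
  rw [hlap, gip_add_left]
  linarith [gip_Dx_self_le h u]

lemma neg_gip_le_young {c : ℝ} (hc : 0 < c) :
    -gip M h u v ≤ c * gip M h u u + gip M h v v / (4 * c) := by
  have key := gip_self_nonneg h ((2 * c) • u + v)
  rw [gip_add_left, gip_add_right, gip_add_right, gip_smul_left, gip_smul_left, gip_smul_right,
    gip_smul_right, gip_comm h v u] at key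
  have hdiv : gip M h v v / (4 * c) * (4 * c) = gip M h v v := div_mul_cancel₀ _ (by positivity)
  nlinarith

end GradientBound

noncomputable def forceX (M : ℕ) (h : ℝ) (v : ZMod M → ZMod M → ℝ) : ZMod M → ZMod M → ℝ :=
  fun a b => Dx M h v a b / (1 + (Dx M h v a b) ^ 2 + (Dy M h v a b) ^ 2)

noncomputable def forceY (M : ℕ) (h : ℝ) (v : ZMod M → ZMod M → ℝ) : ZMod M → ZMod M → ℝ :=
  fun a b => Dy M h v a b / (1 + (Dx M h v a b) ^ 2 + (Dy M h v a b) ^ 2)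

lemma gip_divf_left {M : ℕ} [NeZero M] (h : ℝ) (u v : ZMod M → ZMod M → ℝ) :
    gip M h (divf M h u) v
      = -(gip M h (forceX M h u) (Dx M h v) + gip M h (forceY M h u) (Dy M h v)) := by
  rw [show divf M h u = Dx M h (forceX M h u) + Dy M h (forceY M h u) from rfl, gip_add_left,
    gip_Dx_left, gip_Dy_left]
  ring

-- `log x ≤ x - 1` at `x = (1 + |p|²) / (1 + |q|²)`, then `1 + |q|² ≥ 1` for the quadratic part.
lemma log_one_add_sq_add_sq_sub_le (a b c d : ℝ) :
    Real.log (1 + a ^ 2 + b ^ 2) - Real.log (1 + c ^ 2 + d ^ 2)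
      ≤ 2 * (c / (1 + c ^ 2 + d ^ 2) * (a - c) + d / (1 + c ^ 2 + d ^ 2) * (b - d))
        + ((a - c) ^ 2 + (b - d) ^ 2) := by
  have hx : 0 < 1 + a ^ 2 + b ^ 2 := by positivity
  have hy : 1 ≤ 1 + c ^ 2 + d ^ 2 := by nlinarith [sq_nonneg c, sq_nonneg d]
  have hy0 : 0 < 1 + c ^ 2 + d ^ 2 := by linarith
  have hlog := Real.log_le_sub_one_of_pos (div_pos hx hy0)
  rw [Real.log_div hx.ne' hy0.ne'] at hlog
  have hsplit : (1 + a ^ 2 + b ^ 2) / (1 + c ^ 2 + d ^ 2) - 1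
      = 2 * (c / (1 + c ^ 2 + d ^ 2) * (a - c) + d / (1 + c ^ 2 + d ^ 2) * (b - d))
        + ((a - c) ^ 2 + (b - d) ^ 2) / (1 + c ^ 2 + d ^ 2) := by
    field_simp
    ring
  have hquad : ((a - c) ^ 2 + (b - d) ^ 2) / (1 + c ^ 2 + d ^ 2) ≤ (a - c) ^ 2 + (b - d) ^ 2 :=
    div_le_self (by positivity) hy
  linarith

lemma log_energy_sub_le {M : ℕ} [NeZero M] (h : ℝ) (u v : ZMod M → ZMod M → ℝ) :
    h ^ 2 / 2 * ∑ i : ZMod M, ∑ j : ZMod M,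
        Real.log (1 + (Dx M h v i j) ^ 2 + (Dy M h v i j) ^ 2)
      - h ^ 2 / 2 * ∑ i : ZMod M, ∑ j : ZMod M,
        Real.log (1 + (Dx M h u i j) ^ 2 + (Dy M h u i j) ^ 2)
      ≤ -(gip M h (forceX M h u) (Dx M h (u - v)) + gip M h (forceY M h u) (Dy M h (u - v)))
        + (gip M h (Dx M h (u - v)) (Dx M h (u - v))
          + gip M h (Dy M h (u - v)) (Dy M h (u - v))) / 2 := by
  calc _ = h ^ 2 / 2 * ∑ i : ZMod M, ∑ j : ZMod M,
          (Real.log (1 + (Dx M h v i j) ^ 2 + (Dy M h v i j) ^ 2)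
            - Real.log (1 + (Dx M h u i j) ^ 2 + (Dy M h u i j) ^ 2)) := by
        simp only [← mul_sub, ← sum_sub_distrib]
    _ ≤ h ^ 2 / 2 * ∑ i : ZMod M, ∑ j : ZMod M,
          (2 * (forceX M h u i j * (Dx M h v i j - Dx M h u i j)
              + forceY M h u i j * (Dy M h v i j - Dy M h u i j))
            + ((Dx M h v i j - Dx M h u i j) ^ 2 + (Dy M h v i j - Dy M h u i j) ^ 2)) := by
        gcongr with i _ j _
        exact log_one_add_sq_add_sq_sub_le _ _ _ _
    _ = _ := by
        simp only [gip, Dx_sub, Dy_sub, Pi.sub_apply, mul_sum, sum_div, ← sum_add_distrib,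
          ← sum_neg_distrib]
        refine sum_congr rfl fun i _ => sum_congr rfl fun j _ => ?_
        ring

lemma En_sub_le {M : ℕ} [NeZero M] {h ε : ℝ} (hε : 0 < ε) (D u v : ZMod M → ZMod M → ℝ)
    (hD : ∀ i j, D i j + ε * lap M h (lap M h u) i j + divf M h u i j = 0) :
    En M h ε u - En M h ε v ≤ -gip M h D (u - v) + gip M h (u - v) (u - v) / (8 * ε) := by
  have htest := gip_eq_zero_of_forall_eq_zero h (D + ε • lap M h (lap M h u) + divf M h u)
    (u - v) hD
  rw [gip_add_left, gip_add_left, gip_smul_left, gip_lap_left, gip_divf_left] at htest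
  have hquad : 2 * gip M h (lap M h u) (lap M h (u - v))
      = gip M h (lap M h u) (lap M h u) - gip M h (lap M h v) (lap M h v)
        + gip M h (lap M h (u - v)) (lap M h (u - v)) := by
    rw [lap_sub, gip_sub_right, gip_sub_right, gip_sub_left, gip_sub_left,
      gip_comm h (lap M h v) (lap M h u)]
    ring
  have hlog := log_energy_sub_le h u v
  have hgrad := gip_grad_self_le h (u - v)
  have hyoung := neg_gip_le_young h (lap M h (u - v)) (u - v) hε
  unfold En
  linear_combination hlog - ε / 2 * hquad + htest + hgrad / 2 + hyoung / 2

section BDF2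

variable {M : ℕ} (τ r : ℕ → ℝ) (φ : ℕ → ZMod M → ZMod M → ℝ)

lemma bk_zero (n : ℕ) : bk τ r n 0 = (1 + 2 * r n) / (τ n * (1 + r n)) := if_pos rfl

lemma bk_one (n : ℕ) : bk τ r n 1 = -(r n) ^ 2 / (τ n * (1 + r n)) := by
  simp [bk]

lemma D2g_eq {n : ℕ} (hn : 1 ≤ n) :
    D2g M τ r φ n = bk τ r n 0 • (φ n - φ (n - 1)) + bk τ r n 1 • (φ (n - 1) - φ (n - 2)) := by
  ext i j
  simp only [D2g, Pi.add_apply, Pi.smul_apply, Pi.sub_apply, smul_eq_mul]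
  rw [sum_eq_add n (n - 1) (by omega)]
  · rw [Nat.sub_self, Nat.sub_sub_self hn, Nat.sub_sub]
  · intro k hk hkn
    rw [mem_Icc] at hk
    simp [bk, show n - k ≠ 0 by omega, show n - k ≠ 1 by omega]
  · simp [hn]
  · intro hn1
    rw [mem_Icc] at hn1
    rw [show n - 1 = 0 by omega, sub_self, mul_zero]

end BDF2

lemma En_add_le_of_bdf2 {M : ℕ} [NeZero M] {h ε : ℝ} (hε : 0 < ε)
    {u v w : ZMod M → ZMod M → ℝ} {b₀ b₁ a c : ℝ}
    (hscheme : ∀ i j, (b₀ • (u - v) + b₁ • (v - w)) i j + ε * lap M h (lap M h u) i j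
      + divf M h u i j = 0)
    (ha : 0 ≤ a) (hb₁ : b₁ = -2 * a) (hcoef : c + a + 1 / (8 * ε) ≤ b₀) :
    En M h ε u + c * gip M h (u - v) (u - v) ≤ En M h ε v + a * gip M h (v - w) (v - w) := by
  have hstep := En_sub_le hε _ u v hscheme
  rw [gip_add_left, gip_smul_left, gip_smul_left, hb₁] at hstep
  have hcross := mul_le_mul_of_nonneg_left (two_mul_gip_le h (v - w) (u - v)) ha
  have hdiag := mul_le_mul_of_nonneg_right hcoef (gip_self_nonneg h (u - v))
  linear_combination hstep + hcross + hdiag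

lemma bdf2_coeff_le {ε τ ρ ρ' : ℝ} (hε : 0 < ε) (hτ : 0 < τ) (hρ : 0 ≤ ρ)
    (hstep : τ ≤ 4 * ε * ((2 + 4 * ρ - ρ ^ 2) / (1 + ρ) - ρ' / (1 + ρ'))) :
    ρ' / (2 * (1 + ρ') * τ) + ρ ^ 2 / (2 * (1 + ρ) * τ) + 1 / (8 * ε)
      ≤ (1 + 2 * ρ) / (τ * (1 + ρ)) := by
  generalize hs : ρ' / (1 + ρ') = s at hstep
  have hρ' : ρ' / (2 * (1 + ρ') * τ) = s / (2 * τ) := by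
    rw [← hs, div_div]
    ring
  have hsplit : (1 + 2 * ρ) / (τ * (1 + ρ)) - ρ ^ 2 / (2 * (1 + ρ) * τ) - s / (2 * τ)
      = ((2 + 4 * ρ - ρ ^ 2) / (1 + ρ) - s) / (2 * τ) := by
    field_simp
    ring
  have hε' : 1 / (8 * ε) ≤ ((2 + 4 * ρ - ρ ^ 2) / (1 + ρ) - s) / (2 * τ) := by
    rw [div_le_div_iff₀ (by positivity) (by positivity)]
    linarith
  linarith

section ModifiedEnergy

variable {M : ℕ} [NeZero M] {h ε : ℝ} {τ r : ℕ → ℝ} {φ : ℕ → ZMod M → ZMod M → ℝ}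

lemma calE_of_ne_zero {n : ℕ} (hn : n ≠ 0) :
    calE M h ε τ r φ n = En M h ε (φ n)
      + r (n + 1) / (2 * (1 + r (n + 1)) * τ n) * gip M h (φ n - φ (n - 1)) (φ n - φ (n - 1)) :=
  if_neg hn

lemma calE_sub_one_eq {n : ℕ} (hn : 1 ≤ n) (hτ : 0 < τ n) (hr1 : r 1 = 0)
    (hr : 2 ≤ n → r n = τ n / τ (n - 1)) :
    calE M h ε τ r φ (n - 1) = En M h ε (φ (n - 1))
      + r n ^ 2 / (2 * (1 + r n) * τ n)
        * gip M h (φ (n - 1) - φ (n - 2)) (φ (n - 1) - φ (n - 2)) := by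
  rcases hn.eq_or_lt with rfl | hn2
  · simp [calE, hr1]
  · rw [calE_of_ne_zero (by omega), Nat.sub_add_cancel hn, Nat.sub_sub, hr hn2]
    field_simp

end ModifiedEnergy

theorem stmt16_general (M : ℕ) [NeZero M] (h : ℝ)
    (ε : ℝ) (hε : 0 < ε) (N : ℕ) (τ r : ℕ → ℝ)
    (hτ : ∀ k, 1 ≤ k → k ≤ N → 0 < τ k)
    (hr1 : r 1 = 0)
    (hr : ∀ k, 2 ≤ k → k ≤ N → r k = τ k / τ (k - 1))
    (hstep : ∀ n, 1 ≤ n → n ≤ N →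
      τ n ≤ 4 * ε * min 1
        ((2 + 4 * r n - (r n) ^ 2) / (1 + r n) - r (n + 1) / (1 + r (n + 1))))
    (φ : ℕ → ZMod M → ZMod M → ℝ)
    (hscheme : ∀ n, 1 ≤ n → n ≤ N → ∀ i j : ZMod M,
      D2g M τ r φ n i j + ε * lap M h (lap M h (φ n)) i j + divf M h (φ n) i j = 0) :
    ∀ n, 1 ≤ n → n ≤ N →
      calE M h ε τ r φ n ≤ calE M h ε τ r φ (n - 1)
        ∧ calE M h ε τ r φ n ≤ En M h ε (φ 0) := by
  have hdecay : ∀ n, 1 ≤ n → n ≤ N → calE M h ε τ r φ n ≤ calE M h ε τ r φ (n - 1) := by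
    intro n hn hnN
    have hτn := hτ n hn hnN
    have hrn : 0 ≤ r n := by
      rcases hn.eq_or_lt with rfl | hn2
      · exact hr1.ge
      · rw [hr n hn2 hnN]
        exact (div_pos hτn (hτ (n - 1) (by omega) (by omega))).le
    rw [calE_of_ne_zero (by omega), calE_sub_one_eq hn hτn hr1 fun hn2 => hr n hn2 hnN]
    refine En_add_le_of_bdf2 (b₀ := bk τ r n 0) (b₁ := bk τ r n 1) hε ?_ (by positivity) ?_ ?_
    · rw [← D2g_eq τ r φ hn]
      exact hscheme n hn hnN
    · have h1r : 0 < 1 + r n := by linarith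
      rw [bk_one]
      field_simp
    · rw [bk_zero]
      exact bdf2_coeff_le hε hτn hrn
        ((hstep n hn hnN).trans (mul_le_mul_of_nonneg_left (min_le_right _ _) (by positivity)))
  have hbound : ∀ n, n ≤ N → calE M h ε τ r φ n ≤ En M h ε (φ 0) := by
    intro n
    induction n with
    | zero => exact fun _ => (if_pos rfl).le
    | succ m ih => exact fun hm => (hdecay (m + 1) (by omega) hm).trans (ih (by omega))
  exact fun n hn hnN => ⟨hdecay n hn hnN, hbound n hnN⟩

theorem stmt16 (L : ℝ) (hL : 0 < L) (M : ℕ) [NeZero M] (h : ℝ) (hh : h = L / M)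
    (ε : ℝ) (hε : 0 < ε) (N : ℕ) (hN : 1 ≤ N) (τ r : ℕ → ℝ)
    (hτ : ∀ k, 1 ≤ k → k ≤ N → 0 < τ k)
    (hr1 : r 1 = 0)
    (hr : ∀ k, 2 ≤ k → k ≤ N → r k = τ k / τ (k - 1))
    (hratio : ∀ k, 2 ≤ k → k ≤ N → 0 < r k ∧ r k < (3 + Real.sqrt 17) / 2)
    (hrN1 : 0 ≤ r (N + 1)) (hrN1s : r (N + 1) < (3 + Real.sqrt 17) / 2)
    (hstep : ∀ n, 1 ≤ n → n ≤ N →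
      τ n ≤ 4 * ε * min 1
        ((2 + 4 * r n - (r n) ^ 2) / (1 + r n) - r (n + 1) / (1 + r (n + 1))))
    (φ : ℕ → ZMod M → ZMod M → ℝ)
    (hscheme : ∀ n, 1 ≤ n → n ≤ N → ∀ i j : ZMod M,
      D2g M τ r φ n i j + ε * lap M h (lap M h (φ n)) i j + divf M h (φ n) i j = 0) :
    ∀ n, 1 ≤ n → n ≤ N →
      calE M h ε τ r φ n ≤ calE M h ε τ r φ (n - 1)
        ∧ calE M h ε τ r φ n ≤ En M h ε (φ 0) :=
  stmt16_general M h ε hε N τ r hτ hr1 hr hstep φ hscheme
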